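/- arXiv:1912.05203 — 3 statements merged into one kernel-verified Lean document; each statement's English description precedes it below -/
import Mathlib

section
/- Define H(μ,ν) = P^#_μ(ν) / P^#_ν(ν) for partitions μ ⊆ ν and H'(ρ,λ) = (-1)^{|λ|-|ρ|} H(ρ,λ). Assume the combinatorial formula H(μ,ν) = (1/(|ν|-|μ|)!) ∑_{T ∈ SYT(ν/μ)} ψ'_T(α), where the sum is over standard Young tableaux of skew shape ν/μ and ψ'_T(α) = ∏ over the chain of one-box additions in T of the weights ψ'. Then for any partitions ρ ⊊ λ (strict inclusion), ∑_{σ : ρ ⊆ σ ⊆ λ} H'(ρ,σ) H(σ,λ) = 0. -/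
open Finset

/-- Chains `ρ = f 0 → f 1 → ⋯ → f n = λ` of one-box additions (`cov`), encoding
standard Young tableaux of the skew shape `λ/ρ`. -/
def chainSet {P : Type*} [Fintype P] [DecidableEq P] (cov : P → P → Prop)
    [DecidableRel cov] (n : ℕ) (ρ lam : P) : Finset (Fin (n + 1) → P) :=
  Finset.univ.filter
    (fun f => f 0 = ρ ∧ f (Fin.last n) = lam ∧ ∀ i : Fin n, cov (f i.castSucc) (f i.succ))

/-- The weight `ψ'_T(α)` of a tableau/chain: product of the one-step weights. -/
def chainWeight {P F : Type*} [CommRing F] (ψ : P → P → F) {n : ℕ} (f : Fin (n + 1) → P) : F :=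
  ∏ i : Fin n, ψ (f i.castSucc) (f i.succ)

/-- `H(μ,ν) = (1/(|ν|-|μ|)!) ∑_{T ∈ SYT(ν/μ)} ψ'_T(α)`. -/
def Hfun {P F : Type*} [Fintype P] [DecidableEq P] [Field F] (cov : P → P → Prop)
    [DecidableRel cov] (ψ : P → P → F) (sz : P → ℕ) (μ ν : P) : F :=
  ((Nat.factorial (sz ν - sz μ) : F))⁻¹ *
    ∑ f ∈ chainSet cov (sz ν - sz μ) μ ν, chainWeight ψ f

/-- `H'(μ,ν) = (-1)^{|ν|-|μ|} H(μ,ν)`. -/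
def Hfun' {P F : Type*} [Fintype P] [DecidableEq P] [Field F] (cov : P → P → Prop)
    [DecidableRel cov] (ψ : P → P → F) (sz : P → ℕ) (μ ν : P) : F :=
  (-1 : F) ^ (sz ν - sz μ) * Hfun cov ψ sz μ ν

/-! Let `A` be the matrix of the covering relation weighted by `ψ`. Its `n`-th power counts
weighted chains of length `n`, and since every covering step raises `sz` by one, `A` is nilpotent
and `H(μ,ν)`, `H'(μ,ν)` are the entries of `exp A` and `exp (-A)`. The sum is therefore the
`(ρ,λ)` entry of `exp (-A) * exp A = 1`; restricting to `ρ ≤ σ ≤ λ` loses nothing because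
`H(μ,ν)` vanishes unless `μ ≤ ν`. -/

open Matrix

lemma chainWeight_snoc {P F : Type*} [CommRing F] (ψ : P → P → F) {n : ℕ}
    (g : Fin (n + 1) → P) (ν : P) :
    chainWeight ψ (Fin.snoc g ν : Fin (n + 2) → P) = chainWeight ψ g * ψ (g (Fin.last n)) ν := by
  simp [chainWeight, Fin.prod_univ_castSucc, -Fin.castSucc_succ, Fin.succ_castSucc]

def coverMatrix {P F : Type*} [Zero F] (cov : P → P → Prop) [DecidableRel cov]
    (ψ : P → P → F) : Matrix P P F :=
  Matrix.of fun μ ν => if cov μ ν then ψ μ ν else 0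

section CoverMatrix

variable {P F : Type*} [Fintype P] [DecidableEq P] {cov : P → P → Prop} [DecidableRel cov]

section Chains

lemma mem_chainSet {n : ℕ} {μ ν : P} {f : Fin (n + 1) → P} :
    f ∈ chainSet cov n μ ν ↔
      f 0 = μ ∧ f (Fin.last n) = ν ∧ ∀ i : Fin n, cov (f i.castSucc) (f i.succ) := by
  simp [chainSet]

lemma mem_chainSet_succ {n : ℕ} {μ ν : P} {f : Fin (n + 2) → P} :
    f ∈ chainSet cov (n + 1) μ ν ↔
      Fin.init f ∈ chainSet cov n μ (f (Fin.last n).castSucc) ∧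
        cov (f (Fin.last n).castSucc) ν ∧ f (Fin.last (n + 1)) = ν := by
  simp only [mem_chainSet, Fin.forall_fin_succ', Fin.succ_castSucc, Fin.succ_last, Fin.init,
    Fin.castSucc_zero, true_and]
  aesop

variable [CommRing F] (ψ : P → P → F)

lemma sum_chainSet_succ (n : ℕ) (μ ν : P) :
    ∑ f ∈ chainSet cov (n + 1) μ ν, chainWeight ψ f =
      ∑ σ, (∑ g ∈ chainSet cov n μ σ, chainWeight ψ g) * coverMatrix cov ψ σ ν := by
  simp only [Finset.sum_mul]
  rw [Finset.sum_sigma']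
  simp only [coverMatrix, of_apply, mul_ite, mul_zero]
  rw [← Finset.sum_filter]
  symm
  refine Finset.sum_nbij' (fun x => Fin.snoc x.2 ν)
    (fun f => ⟨f (Fin.last n).castSucc, Fin.init f⟩) ?_ ?_ ?_ ?_ ?_
  · rintro ⟨σ, g⟩ hg
    simp only [mem_filter, mem_sigma, mem_univ, true_and] at hg
    obtain rfl := (mem_chainSet.1 hg.1).2.1
    simpa [mem_chainSet_succ] using hg
  · intro f hf
    obtain ⟨hinit, hcov, -⟩ := mem_chainSet_succ.1 hf
    exact mem_filter.2 ⟨mem_sigma.2 ⟨mem_univ _, hinit⟩, hcov⟩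
  · rintro ⟨σ, g⟩ hg
    simp_all [mem_chainSet]
  · intro f hf
    rw [← (mem_chainSet_succ.1 hf).2.2, Fin.snoc_init_self]
  · rintro ⟨σ, g⟩ hg
    simp_all [mem_chainSet, chainWeight_snoc]

lemma coverMatrix_pow_apply (n : ℕ) (μ ν : P) :
    (coverMatrix cov ψ ^ n) μ ν = ∑ f ∈ chainSet cov n μ ν, chainWeight ψ f := by
  induction n generalizing ν with
  | zero =>
    rw [pow_zero, chainSet, Finset.sum_filter, ← (Equiv.funUnique (Fin 1) P).symm.sum_comp]
    by_cases h : μ = ν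
    · subst h
      simp [chainWeight]
    · rw [one_apply_ne h]
      exact (Finset.sum_eq_zero fun a _ => if_neg fun ha => h (ha.1.symm.trans ha.2.1)).symm
  | succ n ih => simp only [pow_succ, mul_apply, ih, sum_chainSet_succ]

end Chains

section Grading

variable [Semiring F] (ψ : P → P → F)

lemma exists_cov_of_coverMatrix_pow_succ_apply_ne_zero {n : ℕ} {μ ν : P}
    (h : (coverMatrix cov ψ ^ (n + 1)) μ ν ≠ 0) :
    ∃ σ, (coverMatrix cov ψ ^ n) μ σ ≠ 0 ∧ cov σ ν := by
  rw [pow_succ, mul_apply] at h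
  obtain ⟨σ, -, hσ⟩ := Finset.exists_ne_zero_of_sum_ne_zero h
  refine ⟨σ, left_ne_zero_of_mul hσ, ?_⟩
  by_contra hcov
  simp [coverMatrix, hcov] at hσ

lemma sz_eq_of_coverMatrix_pow_apply_ne_zero {sz : P → ℕ}
    (hcov_sz : ∀ a b, cov a b → sz b = sz a + 1) {n : ℕ} {μ ν : P}
    (h : (coverMatrix cov ψ ^ n) μ ν ≠ 0) : sz ν = sz μ + n := by
  induction n generalizing ν with
  | zero =>
    obtain rfl : μ = ν := not_imp_comm.1 one_apply_ne (by rwa [pow_zero] at h)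
    rfl
  | succ n ih =>
    obtain ⟨σ, hσ, hcov⟩ := exists_cov_of_coverMatrix_pow_succ_apply_ne_zero ψ h
    rw [hcov_sz _ _ hcov, ih hσ, add_assoc]

lemma le_of_coverMatrix_pow_apply_ne_zero [Preorder P] (hcov_le : ∀ a b, cov a b → a ≤ b)
    {n : ℕ} {μ ν : P} (h : (coverMatrix cov ψ ^ n) μ ν ≠ 0) : μ ≤ ν := by
  induction n generalizing ν with
  | zero => exact le_of_eq (not_imp_comm.1 one_apply_ne (by rwa [pow_zero] at h))
  | succ n ih =>
    obtain ⟨σ, hσ, hcov⟩ := exists_cov_of_coverMatrix_pow_succ_apply_ne_zero ψ h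
    exact (ih hσ).trans (hcov_le _ _ hcov)

lemma isNilpotent_coverMatrix {sz : P → ℕ} (hcov_sz : ∀ a b, cov a b → sz b = sz a + 1) :
    IsNilpotent (coverMatrix cov ψ) := by
  refine ⟨univ.sup sz + 1, ext fun μ ν => by_contra fun h => ?_⟩
  have hsz := sz_eq_of_coverMatrix_pow_apply_ne_zero ψ hcov_sz h
  have := Finset.le_sup (f := sz) (mem_univ ν)
  omega

end Grading

section Exponential

variable [Field F] (ψ : P → P → F) (sz : P → ℕ)

lemma Hfun_eq_coverMatrix_pow_apply (μ ν : P) :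
    Hfun cov ψ sz μ ν =
      ((sz ν - sz μ).factorial : F)⁻¹ * (coverMatrix cov ψ ^ (sz ν - sz μ)) μ ν := by
  rw [Hfun, coverMatrix_pow_apply]

lemma Hfun_eq_zero_of_not_le [Preorder P] (hcov_le : ∀ a b, cov a b → a ≤ b) {μ ν : P}
    (h : ¬μ ≤ ν) : Hfun cov ψ sz μ ν = 0 := by
  rw [Hfun_eq_coverMatrix_pow_apply,
    not_imp_comm.1 (le_of_coverMatrix_pow_apply_ne_zero ψ hcov_le) h, mul_zero]

variable {sz} [CharZero F]

lemma exp_smul_coverMatrix_apply (hcov_sz : ∀ a b, cov a b → sz b = sz a + 1) (t : F)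
    (μ ν : P) :
    IsNilpotent.exp (t • coverMatrix cov ψ) μ ν = t ^ (sz ν - sz μ) * Hfun cov ψ sz μ ν := by
  obtain ⟨k, hk⟩ := isNilpotent_coverMatrix ψ hcov_sz
  rw [IsNilpotent.exp_eq_sum (k := k) (by rw [smul_pow, hk, smul_zero]), Matrix.sum_apply,
    Finset.sum_eq_single (sz ν - sz μ), Hfun_eq_coverMatrix_pow_apply]
  · simp only [smul_pow, Matrix.smul_apply, smul_eq_mul, Rat.smul_def, Rat.cast_inv,
      Rat.cast_natCast]
    ring
  · intro i _ hi
    have hpow : (coverMatrix cov ψ ^ i) μ ν = 0 := by_contra fun h =>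
      hi (by have := sz_eq_of_coverMatrix_pow_apply_ne_zero ψ hcov_sz h; omega)
    simp [smul_pow, hpow]
  · intro hd
    simp [smul_pow, pow_eq_zero_of_le (not_lt.1 (mem_range.not.1 hd)) hk]

end Exponential

end CoverMatrix

theorem sum_H'_H_eq_zero_general {P F : Type*} [Fintype P] [DecidableEq P] [PartialOrder P]
    [DecidableRel ((· ≤ ·) : P → P → Prop)] [Field F] [CharZero F]
    (cov : P → P → Prop) [DecidableRel cov] (ψ : P → P → F) (sz : P → ℕ)
    (hcov_sz : ∀ a b, cov a b → sz b = sz a + 1)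
    (hcov_le : ∀ a b, cov a b → a ≤ b)
    (ρ lam : P) (h : ρ < lam) :
    ∑ σ ∈ Finset.univ.filter (fun σ => ρ ≤ σ ∧ σ ≤ lam),
      Hfun' cov ψ sz ρ σ * Hfun cov ψ sz σ lam = 0 := by
  set A := coverMatrix cov ψ
  have hH (μ ν : P) : Hfun cov ψ sz μ ν = IsNilpotent.exp A μ ν := by
    simpa using (exp_smul_coverMatrix_apply ψ hcov_sz 1 μ ν).symm
  have hH' (μ ν : P) : Hfun' cov ψ sz μ ν = IsNilpotent.exp (-A) μ ν := by
    rw [Hfun', ← neg_one_smul F A, exp_smul_coverMatrix_apply ψ hcov_sz]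
  calc ∑ σ ∈ univ.filter (fun σ => ρ ≤ σ ∧ σ ≤ lam), Hfun' cov ψ sz ρ σ * Hfun cov ψ sz σ lam
      = ∑ σ, Hfun' cov ψ sz ρ σ * Hfun cov ψ sz σ lam := by
        refine sum_subset (subset_univ _) fun σ _ hσ => ?_
        rcases not_and_or.1 (by simpa using hσ) with hρσ | hσlam
        · rw [Hfun', Hfun_eq_zero_of_not_le ψ sz hcov_le hρσ, mul_zero, zero_mul]
        · rw [Hfun_eq_zero_of_not_le ψ sz hcov_le hσlam, mul_zero]
    _ = (IsNilpotent.exp (-A) * IsNilpotent.exp A) ρ lam := by simp only [mul_apply, hH, hH']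
    _ = 0 := by
        rw [IsNilpotent.exp_neg_mul_exp_self (isNilpotent_coverMatrix ψ hcov_sz),
          one_apply_ne h.ne]

/-- The orthogonality relation: for partitions `ρ ⊊ λ`,
`∑_{σ : ρ ⊆ σ ⊆ λ} H'(ρ,σ) H(σ,λ) = 0`. -/
theorem sum_H'_H_eq_zero {P F : Type*} [Fintype P] [DecidableEq P] [PartialOrder P]
    [DecidableRel ((· ≤ ·) : P → P → Prop)] [Field F] [CharZero F]
    (cov : P → P → Prop) [DecidableRel cov] (ψ : P → P → F) (sz : P → ℕ)
    (hcov_sz : ∀ a b, cov a b → sz b = sz a + 1)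
    (hcov_le : ∀ a b, cov a b → a ≤ b)
    (hstrict : StrictMono sz)
    (ρ lam : P) (h : ρ < lam) :
    ∑ σ ∈ Finset.univ.filter (fun σ => ρ ≤ σ ∧ σ ≤ lam),
      Hfun' cov ψ sz ρ σ * Hfun cov ψ sz σ lam = 0 :=
  sum_H'_H_eq_zero_general cov ψ sz hcov_sz hcov_le ρ lam h
end

section
/- Fix a real α > 0, a partition λ, and a reverse semistandard Young tableau T of shape μ with entries in {1,…,n} (entries weakly decreasing along rows and strictly decreasing down columns). If for some box s = (i,j) of μ we have λ_{T(i,j)} − (j−1) + (i−1)/α < 0, then there exists a box s' = (1, j') in the first row of μ with 1 ≤ j' ≤ j such that λ_{T(1,j')} − (j'−1) + 0/α = 0, i.e., λ_{T(1,j')} = j'−1. -/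
/-! The integer sequence `g k = λ_{T(1,k)} + 1 - k` along the first row starts at `g 1 ≥ 0`,
and since `T` decreases along rows and `λ` is a partition, it drops by at most one per step.
Down column `j` the entries of `T` decrease, so `λ_{T(1,j)} ≤ λ_{T(i,j)}`, and the negative
factor at `(i,j)` (with `(i-1)/α ≥ 0`) forces `g j < 0`; a discrete intermediate value
argument then gives a zero of `g`. -/

theorem exists_eq_zero_of_sub_one_le_succ (g : ℕ → ℤ) {a b : ℕ} (hab : a ≤ b)
    (ha : 0 ≤ g a) (hb : g b < 0) (hstep : ∀ k, a ≤ k → k < b → g k - 1 ≤ g (k + 1)) :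
    ∃ k, a ≤ k ∧ k ≤ b ∧ g k = 0 := by
  induction b, hab using Nat.le_induction with
  | base => omega
  | succ b hab ih =>
    by_cases hgb : g b < 0
    · obtain ⟨k, hak, hkb, hk⟩ := ih hgb fun k hak hkb => hstep k hak (by omega)
      exact ⟨k, hak, by omega, hk⟩
    · have := hstep b hab (by omega)
      exact ⟨b, hab, by omega, by omega⟩

theorem le_first_of_column_strictAnti (μ : ℕ → ℕ) (T : ℕ × ℕ → ℕ)
    (hμ : ∀ k l, 1 ≤ k → k ≤ l → μ l ≤ μ k)
    (hTcol : ∀ i j, 1 ≤ i → 1 ≤ j → j ≤ μ (i + 1) → T (i + 1, j) < T (i, j))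
    {i j : ℕ} (hi : 1 ≤ i) (hj : 1 ≤ j) (hbox : j ≤ μ i) :
    T (i, j) ≤ T (1, j) := by
  induction i, hi using Nat.le_induction with
  | base => rfl
  | succ i hi ih =>
    have hbox' : j ≤ μ i := hbox.trans (hμ i (i + 1) hi (by omega))
    exact (hTcol i j hi hj hbox).le.trans (ih hbox')

/-- The intermediate-value lemma for reverse semistandard tableaux evaluated at a
partition: if for some box `(i,j)` of `μ` the factor
`λ_{T(i,j)} − (j−1) + (i−1)/α` is negative, then some box `(1,j')` of the first row
with `j' ≤ j` yields a zero factor, i.e. `λ_{T(1,j')} = j'−1`.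

Boxes are indexed starting from `1`: box `(i,j)` belongs to `μ` iff `1 ≤ j ≤ μ i`.
The tableau `T` has entries in `{1,…,n}`, weakly decreasing along rows and strictly
decreasing down columns; `λ` and `μ` are partitions (weakly decreasing on positive
indices, with nonnegative integer values). -/
theorem exists_zero_factor_in_first_row (α : ℝ) (hα : 0 < α) (n : ℕ)
    (μ lam : ℕ → ℕ)
    (hμ : ∀ k l, 1 ≤ k → k ≤ l → μ l ≤ μ k)
    (hlam : ∀ k l, 1 ≤ k → k ≤ l → lam l ≤ lam k)
    (T : ℕ × ℕ → ℕ)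
    (hTrange : ∀ i j, 1 ≤ i → 1 ≤ j → j ≤ μ i → 1 ≤ T (i, j) ∧ T (i, j) ≤ n)
    (hTrow : ∀ i j, 1 ≤ i → 1 ≤ j → j + 1 ≤ μ i → T (i, j + 1) ≤ T (i, j))
    (hTcol : ∀ i j, 1 ≤ i → 1 ≤ j → j ≤ μ (i + 1) → T (i + 1, j) < T (i, j))
    (i j : ℕ) (hi : 1 ≤ i) (hj : 1 ≤ j) (hbox : j ≤ μ i)
    (hneg : (lam (T (i, j)) : ℝ) - ((j : ℝ) - 1) + ((i : ℝ) - 1) / α < 0) :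
    ∃ j', 1 ≤ j' ∧ j' ≤ j ∧ (lam (T (1, j')) : ℝ) = (j' : ℝ) - 1 := by
  have hrow₁ : ∀ k, k ≤ j → k ≤ μ 1 := fun k hk => hk.trans (hbox.trans (hμ 1 i le_rfl hi))
  have hlt : lam (T (i, j)) + 1 < j := by
    have : (0 : ℝ) ≤ ((i : ℝ) - 1) / α := div_nonneg (by simp [hi]) hα.le
    exact_mod_cast (show (lam (T (i, j)) : ℝ) + 1 < j by linarith)
  have hcol : lam (T (1, j)) ≤ lam (T (i, j)) :=
    hlam _ _ (hTrange i j hi hj hbox).1 (le_first_of_column_strictAnti μ T hμ hTcol hi hj hbox)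
  have hstep : ∀ k, 1 ≤ k → k < j → lam (T (1, k)) ≤ lam (T (1, k + 1)) := fun k hk hkj =>
    hlam _ _ (hTrange 1 (k + 1) le_rfl (by omega) (hrow₁ _ hkj)).1
      (hTrow 1 k le_rfl hk (hrow₁ _ hkj))
  obtain ⟨k, hk, hkj, hzero⟩ := exists_eq_zero_of_sub_one_le_succ
    (fun k => (lam (T (1, k)) : ℤ) + 1 - k) hj (by simp) (by omega)
    fun k hk hkj => by have := hstep k hk hkj; push_cast; omega
  refine ⟨k, hk, hkj, ?_⟩
  have : ((lam (T (1, k)) + 1 : ℕ) : ℝ) = k := by congr 1; omega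
  push_cast at this
  linarith
end

section
/- Fix a real α > 0, partitions μ, ν, λ with ν ⊆ λ and |λ| = |ν| + 1, say λ_i = ν_i + 1 and λ_k = ν_k for k ≠ i. Assume for each reverse semistandard tableau T of shape μ that ψ_T(α) ≥ 0. Then ∑_{T ∈ RSSYT(μ,n)} ψ_T(α) · ( ∏_{s∈μ} (λ_{T(s)} − b(s)) − ∏_{s∈μ} (ν_{T(s)} − b(s)) ) ≥ 0, where b(i,j) = (j−1) − (i−1)/α. -/
/-!
Fix a tableau `T`. Since `ν ≤ λ` pointwise, the product for `λ` dominates the one for `ν` as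
soon as all factors `ν_{T(s)} − b(s)` are nonnegative. Otherwise some `ν_{T(i,j)} < b(i,j) ≤ j − 1`;
column strictness moves this to the first row, where `b(1,k) = k − 1`. Along the first row
`k ↦ ν_{T(1,k)}` is weakly increasing, so `ν_{T(1,k)} − (k − 1)` drops by at most one per step
from a nonnegative value to a negative one and must vanish: the `ν`-product has a zero factor.
The same holds for `λ`, since `λ_{T(1,j)} ≤ ν_{T(1,j)} + 1`, so the difference is `0`.
-/

open Finset

/-- The boxes of the Young diagram of a partition `μ` with at most `n` rows, indexed
starting from `1`: box `(i,j)` with `1 ≤ i ≤ n` and `1 ≤ j ≤ μ i`. -/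
def youngBoxes (μ : ℕ → ℕ) (n : ℕ) : Finset (ℕ × ℕ) :=
  (Finset.Icc 1 n ×ˢ Finset.Icc 1 (μ 1)).filter (fun p => p.2 ≤ μ p.1)

lemma mem_youngBoxes {μ : ℕ → ℕ} {n i j : ℕ} :
    (i, j) ∈ youngBoxes μ n ↔ (1 ≤ i ∧ i ≤ n) ∧ (1 ≤ j ∧ j ≤ μ 1) ∧ j ≤ μ i := by
  simp [youngBoxes, and_assoc]

noncomputable def boxContent (α : ℝ) (s : ℕ × ℕ) : ℝ :=
  ((s.2 : ℝ) - 1) - ((s.1 : ℝ) - 1) / α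

lemma boxContent_one (α : ℝ) (k : ℕ) : boxContent α (1, k) = (k : ℝ) - 1 := by
  simp [boxContent]

lemma boxContent_le {α : ℝ} (hα : 0 < α) {i : ℕ} (hi : 1 ≤ i) (j : ℕ) :
    boxContent α (i, j) ≤ (j : ℝ) - 1 := by
  have : (0 : ℝ) ≤ ((i : ℝ) - 1) / α := div_nonneg (by simp [hi]) hα.le
  simp only [boxContent]
  linarith

lemma exists_add_one_eq_of_le_succ {g : ℕ → ℕ} {j : ℕ}
    (hstep : ∀ k, 1 ≤ k → k < j → g k ≤ g (k + 1)) (hj : g j + 1 ≤ j) :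
    ∃ k, 1 ≤ k ∧ k ≤ j ∧ g k + 1 = k := by
  induction j with
  | zero => omega
  | succ j ih =>
    by_cases hfix : g (j + 1) + 1 = j + 1
    · exact ⟨j + 1, by omega, le_rfl, hfix⟩
    · have hj' : g j + 1 ≤ j := by
        have := hstep j (by omega) (by omega)
        omega
      obtain ⟨k, hk1, hkj, hk⟩ := ih (fun k hk hkj => hstep k hk (by omega)) hj'
      exact ⟨k, hk1, by omega, hk⟩

section Tableau

variable {μ : ℕ → ℕ} {T : ℕ × ℕ → ℕ}

lemma le_first_row_of_col_strict (hμ : AntitoneOn μ (Set.Ici 1))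
    (hcol : ∀ i j, 1 ≤ i → 1 ≤ j → j ≤ μ (i + 1) → T (i + 1, j) < T (i, j))
    {i j : ℕ} (hi : 1 ≤ i) (hj : 1 ≤ j) (hji : j ≤ μ i) : T (i, j) ≤ T (1, j) := by
  induction i, hi using Nat.le_induction with
  | base => exact le_rfl
  | succ i hi ih =>
    have hji' : j ≤ μ i := hji.trans (hμ (Set.mem_Ici.2 hi) (Set.mem_Ici.2 (by omega)) (by omega))
    exact (hcol i j hi hj hji).le.trans (ih hji')

lemma prod_youngBoxes_eq_zero (α : ℝ) {n : ℕ} {f : ℕ → ℕ} (hf : AntitoneOn f (Set.Ici 1))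
    (hrow : ∀ k, 1 ≤ k → k + 1 ≤ μ 1 → T (1, k + 1) ≤ T (1, k))
    (hpos : ∀ k, 1 ≤ k → k ≤ μ 1 → 1 ≤ T (1, k))
    {j : ℕ} (hs : (1, j) ∈ youngBoxes μ n) (hj : f (T (1, j)) + 1 ≤ j) :
    ∏ s ∈ youngBoxes μ n, ((f (T s) : ℝ) - boxContent α s) = 0 := by
  obtain ⟨⟨-, hn⟩, ⟨-, hjμ⟩, -⟩ := mem_youngBoxes.1 hs
  obtain ⟨k, hk1, hkj, hk⟩ := exists_add_one_eq_of_le_succ (g := fun k => f (T (1, k)))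
    (fun k hk hkj => hf (Set.mem_Ici.2 (hpos (k + 1) (by omega) (by omega)))
      (Set.mem_Ici.2 (hpos k hk (by omega))) (hrow k hk (by omega))) hj
  refine prod_eq_zero (i := (1, k)) (mem_youngBoxes.2 ⟨⟨le_rfl, hn⟩, ⟨hk1, by omega⟩, by omega⟩) ?_
  have hk' : (k : ℝ) = f (T (1, k)) + 1 := by exact_mod_cast hk.symm
  rw [boxContent_one, hk']
  ring

lemma prod_sub_prod_nonneg {α : ℝ} (hα : 0 < α) (n : ℕ) {ν lam : ℕ → ℕ}
    (hμ : AntitoneOn μ (Set.Ici 1)) (hν : AntitoneOn ν (Set.Ici 1))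
    (hlam : AntitoneOn lam (Set.Ici 1)) (hle : ∀ k, ν k ≤ lam k) (hle_succ : ∀ k, lam k ≤ ν k + 1)
    (hpos : ∀ i j, 1 ≤ i → 1 ≤ j → j ≤ μ i → 1 ≤ T (i, j))
    (hrow : ∀ i j, 1 ≤ i → 1 ≤ j → j + 1 ≤ μ i → T (i, j + 1) ≤ T (i, j))
    (hcol : ∀ i j, 1 ≤ i → 1 ≤ j → j ≤ μ (i + 1) → T (i + 1, j) < T (i, j)) :
    0 ≤ ∏ s ∈ youngBoxes μ n, ((lam (T s) : ℝ) - boxContent α s)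
      - ∏ s ∈ youngBoxes μ n, ((ν (T s) : ℝ) - boxContent α s) := by
  by_cases hall : ∀ s ∈ youngBoxes μ n, 0 ≤ (ν (T s) : ℝ) - boxContent α s
  · refine sub_nonneg.2 (prod_le_prod hall fun s _ => ?_)
    exact sub_le_sub_right (Nat.cast_le.2 (hle _)) _
  push Not at hall
  obtain ⟨⟨i, j⟩, hs, hneg⟩ := hall
  obtain ⟨⟨hi, hn⟩, ⟨hj, hjμ⟩, hji⟩ := mem_youngBoxes.1 hs
  have hs₁ : (1, j) ∈ youngBoxes μ n := mem_youngBoxes.2 ⟨⟨le_rfl, by omega⟩, ⟨hj, hjμ⟩, hjμ⟩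
  have hνij : ν (T (i, j)) + 1 < j := by
    have : (ν (T (i, j)) : ℝ) < j - 1 := by linarith [boxContent_le hα hi j]
    exact_mod_cast (by linarith : (ν (T (i, j)) : ℝ) + 1 < j)
  have hν₁ : ν (T (1, j)) + 1 < j := by
    have := hν (Set.mem_Ici.2 (hpos i j hi hj hji)) (Set.mem_Ici.2 (hpos 1 j le_rfl hj hjμ))
      (le_first_row_of_col_strict hμ hcol hi hj hji)
    omega
  have hrow₁ := fun k => hrow 1 k le_rfl
  have hpos₁ := fun k => hpos 1 k le_rfl
  rw [prod_youngBoxes_eq_zero α hlam hrow₁ hpos₁ hs₁ (by linarith [hle_succ (T (1, j))]),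
    prod_youngBoxes_eq_zero α hν hrow₁ hpos₁ hs₁ hν₁.le, sub_zero]

end Tableau

theorem shifted_jack_eval_diff_nonneg_general (α : ℝ) (hα : 0 < α) (n : ℕ)
    (μ ν lam : ℕ → ℕ)
    (hμ : ∀ k l, 1 ≤ k → k ≤ l → μ l ≤ μ k)
    (hν : ∀ k l, 1 ≤ k → k ≤ l → ν l ≤ ν k)
    (hlam : ∀ k l, 1 ≤ k → k ≤ l → lam l ≤ lam k)
    (i₀ : ℕ)
    (hbox : lam i₀ = ν i₀ + 1) (hsame : ∀ k, k ≠ i₀ → lam k = ν k)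
    (RSSYT : Finset ((ℕ × ℕ) → ℕ))
    (hT : ∀ T ∈ RSSYT,
      (∀ i j, 1 ≤ i → 1 ≤ j → j ≤ μ i → 1 ≤ T (i, j) ∧ T (i, j) ≤ n) ∧
      (∀ i j, 1 ≤ i → 1 ≤ j → j + 1 ≤ μ i → T (i, j + 1) ≤ T (i, j)) ∧
      (∀ i j, 1 ≤ i → 1 ≤ j → j ≤ μ (i + 1) → T (i + 1, j) < T (i, j)))
    (ψ : ((ℕ × ℕ) → ℕ) → ℝ) (hψ : ∀ T ∈ RSSYT, 0 ≤ ψ T) :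
    0 ≤ ∑ T ∈ RSSYT, ψ T *
      ((∏ s ∈ youngBoxes μ n,
          ((lam (T s) : ℝ) - (((s.2 : ℝ) - 1) - ((s.1 : ℝ) - 1) / α)))
        - ∏ s ∈ youngBoxes μ n,
          ((ν (T s) : ℝ) - (((s.2 : ℝ) - 1) - ((s.1 : ℝ) - 1) / α))) := by
  have hνlam k : ν k ≤ lam k ∧ lam k ≤ ν k + 1 := by
    rcases eq_or_ne k i₀ with rfl | hk
    · omega
    · rw [hsame k hk]; omega
  refine sum_nonneg fun T hTm => mul_nonneg (hψ T hTm) ?_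
  obtain ⟨hentry, hrow, hcol⟩ := hT T hTm
  exact prod_sub_prod_nonneg hα n (fun k hk l _ hkl => hμ k l hk hkl)
    (fun k hk l _ hkl => hν k l hk hkl) (fun k hk l _ hkl => hlam k l hk hkl)
    (fun k => (hνlam k).1) (fun k => (hνlam k).2)
    (fun i j hi hj hji => (hentry i j hi hj hji).1) hrow hcol

/-- Equation (nonnegcase1eq): for `α > 0` and partitions `ν ⊆ λ` differing by a single
box (`λ_{i₀} = ν_{i₀} + 1` and `λ_k = ν_k` for `k ≠ i₀`),
`∑_{T ∈ RSSYT(μ,n)} ψ_T(α) (∏_{s∈μ}(λ_{T(s)} − b(s)) − ∏_{s∈μ}(ν_{T(s)} − b(s))) ≥ 0`,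
where `b(i,j) = (j−1) − (i−1)/α`. -/
theorem shifted_jack_eval_diff_nonneg (α : ℝ) (hα : 0 < α) (n : ℕ)
    (μ ν lam : ℕ → ℕ)
    (hμrows : ∀ k, n < k → μ k = 0)
    (hμ : ∀ k l, 1 ≤ k → k ≤ l → μ l ≤ μ k)
    (hν : ∀ k l, 1 ≤ k → k ≤ l → ν l ≤ ν k)
    (hlam : ∀ k l, 1 ≤ k → k ≤ l → lam l ≤ lam k)
    (i₀ : ℕ) (hi₀ : 1 ≤ i₀)
    (hbox : lam i₀ = ν i₀ + 1) (hsame : ∀ k, k ≠ i₀ → lam k = ν k)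
    (RSSYT : Finset ((ℕ × ℕ) → ℕ))
    (hT : ∀ T ∈ RSSYT,
      (∀ i j, 1 ≤ i → 1 ≤ j → j ≤ μ i → 1 ≤ T (i, j) ∧ T (i, j) ≤ n) ∧
      (∀ i j, 1 ≤ i → 1 ≤ j → j + 1 ≤ μ i → T (i, j + 1) ≤ T (i, j)) ∧
      (∀ i j, 1 ≤ i → 1 ≤ j → j ≤ μ (i + 1) → T (i + 1, j) < T (i, j)))
    (ψ : ((ℕ × ℕ) → ℕ) → ℝ) (hψ : ∀ T ∈ RSSYT, 0 ≤ ψ T) :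
    0 ≤ ∑ T ∈ RSSYT, ψ T *
      ((∏ s ∈ youngBoxes μ n,
          ((lam (T s) : ℝ) - (((s.2 : ℝ) - 1) - ((s.1 : ℝ) - 1) / α)))
        - ∏ s ∈ youngBoxes μ n,
          ((ν (T s) : ℝ) - (((s.2 : ℝ) - 1) - ((s.1 : ℝ) - 1) / α))) :=
  shifted_jack_eval_diff_nonneg_general α hα n μ ν lam hμ hν hlam i₀ hbox hsame RSSYT hT ψ hψ
end
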